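/- Assume r and θ are nonconstant. For every real number k ≠ 0, the polynomials α(t,s) and β_k(t,s) have no nonconstant common divisor in ℝ[t,s], i.e. gcd(α, β_k) = 1. In particular, for each real k ≠ 0 the system r(t) = r(s), θ(t) = θ(s) + 2kπ has only finitely many solutions (t,s) ∈ Ω × Ω. -/

import Mathlib

/- In ℝ[t,s] (modelled as MvPolynomial (Fin 2) ℝ, with t = X 0 and s = X 1):
`inT p` is p(t), `inS p` is p(s). -/
noncomputable def inT (p : Polynomial ℝ) : MvPolynomial (Fin 2) ℝ :=
  Polynomial.aeval (MvPolynomial.X 0) p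

noncomputable def inS (p : Polynomial ℝ) : MvPolynomial (Fin 2) ℝ :=
  Polynomial.aeval (MvPolynomial.X 1) p

/-- α(t,s) = A(t)B(s) − A(s)B(t). -/
noncomputable def alphaPoly (A B : Polynomial ℝ) : MvPolynomial (Fin 2) ℝ :=
  inT A * inS B - inS A * inT B

/-- β_k(t,s) = C(t)D(s) − C(s)D(t) − 2kπ·D(t)D(s). -/
noncomputable def betaPoly (C D : Polynomial ℝ) (k : ℝ) : MvPolynomial (Fin 2) ℝ :=
  inT C * inS D - inS C * inT D -
    MvPolynomial.C (2 * k * Real.pi) * (inT D * inS D)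

/-!
Coprimality. Suppose a nonunit `h` divides both `α` and `β_k`. In an algebraically closed field
`L` containing a transcendental `x₀` over `ℝ`, every transcendental `u` has a transcendental `v`
with `h(u, v) = 0`: since no nonunit polynomial in `t` alone divides `α`, `h(u, ·)` has a root, and
`r(u) = r(v)` with `r` nonconstant forces `v` to be transcendental. Iterating gives a sequence
`x₀, x₁, …` with `r(xₙ) = r(x₀)` and `θ(xₙ) = θ(x₀) - 2nkπ`. The second relation makes the `xₙ`
pairwise distinct, while the first makes them roots of the nonzero polynomial
`A(x₀)B(Y) - B(x₀)A(Y)`.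

Finiteness. By Gauss's lemma, coprime `P, Q ∈ K[t][s]` stay coprime in `K(t)[s]`, so some nonzero
`d(t)` lies in the ideal `(P, Q)`, and symmetrically some nonzero `d'(s)`; every common zero
`(t, s)` satisfies `d(t) = d'(s) = 0`.
-/

open Polynomial Polynomial.Bivariate IntermediateField

theorem IsRelPrime.map_equiv {M N F : Type*} [Monoid M] [Monoid N] [EquivLike F M N]
    [MulEquivClass F M N] (e : F) {a b : M} (h : IsRelPrime a b) : IsRelPrime (e a) (e b) :=
  IsRelPrime.of_map (e : M ≃* N).symm (by simpa using h)

namespace Polynomial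

open scoped nonZeroDivisors

theorem IsRelPrime.isCoprime_map_fraction {R K : Type*} [CommRing R] [IsDomain R]
    [IsGCDMonoid R] [Field K] [Algebra R K] [IsFractionRing R K] {P Q : R[X]}
    (h : IsRelPrime P Q) :
    IsCoprime (P.map (algebraMap R K)) (Q.map (algebraMap R K)) := by
  have := Classical.arbitrary (NormalizedGCDMonoid R)
  -- Up to a unit of `K[X]`, a common divisor `g` is the image of the primitive part of its
  -- integer normalization, which divides `P` and `Q` by Gauss's lemma.
  refine IsRelPrime.isCoprime fun g hgP hgQ => ?_
  obtain rfl | hg := eq_or_ne g 0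
  · rw [zero_dvd_iff, Polynomial.map_eq_zero_iff (IsFractionRing.injective R K)] at hgP hgQ
    exact absurd (hgP ▸ hgQ ▸ h) not_isRelPrime_zero_zero
  set N := IsLocalization.integerNormalization R⁰ g
  obtain ⟨b, hb, hNg⟩ := IsLocalization.integerNormalization_spec R⁰ g
  have hunit : IsUnit (C (algebraMap R K b)) :=
    isUnit_C.mpr (IsUnit.mk0 _ (IsFractionRing.to_map_ne_zero_of_mem_nonZeroDivisors hb))
  rw [← algebraMap_smul K b g, smul_eq_C_mul] at hNg
  have hdvd {P' : R[X]} (hgP' : g ∣ P'.map (algebraMap R K)) : N.primPart ∣ P' := by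
    apply (isPrimitive_primPart N).dvd_of_fraction_map_dvd_fraction_map (K := K)
    have hN : N.primPart.map (algebraMap R K) ∣ N.map (algebraMap R K) :=
      Polynomial.map_dvd _ (primPart_dvd N)
    rw [hNg] at hN
    exact hN.trans (hunit.mul_left_dvd.mpr hgP')
  exact isUnit_or_eq_zero_of_isUnit_integerNormalization_primPart hg (h (hdvd hgP) (hdvd hgQ))

attribute [local instance] Polynomial.algebra Polynomial.isLocalization in
theorem exists_mul_add_mul_eq_C_of_isCoprime_map {R K : Type*} [CommRing R] [IsDomain R]
    [Field K] [Algebra R K] [IsFractionRing R K] {P Q : R[X]}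
    (h : IsCoprime (P.map (algebraMap R K)) (Q.map (algebraMap R K))) :
    ∃ d : R, d ≠ 0 ∧ ∃ U V : R[X], U * P + V * Q = C d := by
  -- `K[X]` is the localization of `R[X]` at the nonzero constants.
  have htop : (Ideal.span {P, Q}).map (algebraMap R[X] K[X]) = ⊤ := by
    obtain ⟨u, v, huv⟩ := h
    rw [Ideal.eq_top_iff_one, ← huv, Ideal.map_span, Set.image_pair]
    exact Ideal.mem_span_pair.mpr ⟨u, v, rfl⟩
  obtain ⟨_, ⟨d, hd, rfl⟩, hdPQ⟩ := Set.not_disjoint_iff.mp fun hdisj =>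
    (IsLocalization.map_algebraMap_ne_top_iff_disjoint (R⁰.map C) K[X] _).mpr hdisj htop
  obtain ⟨U, V, hUV⟩ := Ideal.mem_span_pair.mp hdPQ
  exact ⟨d, nonZeroDivisors.ne_zero hd, U, V, hUV⟩

theorem exists_mul_add_mul_eq_C_of_isRelPrime {R : Type*} [CommRing R] [IsDomain R]
    [IsGCDMonoid R] {P Q : R[X]} (h : IsRelPrime P Q) :
    ∃ d : R, d ≠ 0 ∧ ∃ U V : R[X], U * P + V * Q = C d :=
  exists_mul_add_mul_eq_C_of_isCoprime_map (h.isCoprime_map_fraction (K := FractionRing R))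

section AevalAeval

variable {R A : Type*} [CommSemiring R] [CommSemiring A] [Algebra R A]

theorem aevalAeval_equivMvPolynomial_symm (x y : A) (P : MvPolynomial (Fin 2) R) :
    aevalAeval x y ((equivMvPolynomial R).symm P) = MvPolynomial.aeval ![x, y] P := by
  have : (aevalAeval x y).comp ((equivMvPolynomial R).symm : MvPolynomial (Fin 2) R →ₐ[R] R[X][Y])
      = MvPolynomial.aeval ![x, y] :=
    MvPolynomial.algHom_ext fun i => by fin_cases i <;> simp
  exact DFunLike.congr_fun this P

theorem eval_map_aeval_eq_aevalAeval (x y : A) (P : R[X][Y]) :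
    (P.map (aeval x : R[X] →ₐ[R] A).toRingHom).eval y = aevalAeval x y P := by
  have : aevalTower (aeval (R := R) x) y = aevalAeval x y :=
    algHom_ext' (algHom_ext (by simp)) (by simp)
  rw [eval_map, ← this]
  rfl

end AevalAeval

theorem Bivariate.finite_setOf_aevalAeval_eq_zero_of_isRelPrime {K : Type*} [Field K]
    {P Q : K[X][Y]} (h : IsRelPrime P Q) :
    {p : K × K | aevalAeval p.1 p.2 P = 0 ∧ aevalAeval p.1 p.2 Q = 0}.Finite := by
  obtain ⟨d, hd, U, V, hUV⟩ := exists_mul_add_mul_eq_C_of_isRelPrime h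
  obtain ⟨d', hd', U', V', hUV'⟩ := exists_mul_add_mul_eq_C_of_isRelPrime (h.map_equiv swap)
  refine ((finite_setOfPred_isRoot hd).prod (finite_setOfPred_isRoot hd')).subset ?_
  rintro ⟨x, y⟩ ⟨hP, hQ⟩
  constructor
  · have := congrArg (aevalAeval x y) hUV
    simp only [map_add, map_mul, hP, hQ, mul_zero, add_zero, aevalAeval_C] at this
    simpa using this.symm
  · have := congrArg (aevalAeval y x) hUV'
    simp only [map_add, map_mul, aevalAeval_swap, hP, hQ, mul_zero, add_zero,
      aevalAeval_C] at this
    simpa using this.symm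

theorem _root_.MvPolynomial.finite_setOf_aeval_eq_zero_of_isRelPrime {K : Type*} [Field K]
    {P Q : MvPolynomial (Fin 2) K} (h : IsRelPrime P Q) :
    {p : K × K | MvPolynomial.aeval ![p.1, p.2] P = 0 ∧
      MvPolynomial.aeval ![p.1, p.2] Q = 0}.Finite := by
  have := Bivariate.finite_setOf_aevalAeval_eq_zero_of_isRelPrime
    (h.map_equiv (equivMvPolynomial K).symm)
  simpa only [aevalAeval_equivMvPolynomial_symm] using this

theorem natDegree_eq_zero_of_C_mul_eq_C_mul {L : Type*} [Field L] {A B : L[X]}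
    (hAB : IsCoprime A B) {a b : L} (hb : b ≠ 0) (h : C a * B = C b * A) :
    A.natDegree = 0 ∧ B.natDegree = 0 := by
  obtain ⟨p, q, hpq⟩ := hAB
  have hB : B ∣ C b := ⟨p * C a + q * C b, by linear_combination -(p * h) - C b * hpq⟩
  have hB0 : B.natDegree = 0 := by
    simpa using natDegree_le_of_dvd hB (C_ne_zero.mpr hb)
  refine ⟨?_, hB0⟩
  have := natDegree_C_mul_le a B
  rw [h, natDegree_C_mul hb, hB0] at this
  omega

variable {K L : Type*} [Field K] [Field L] [Algebra K L] {A B : K[X]}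

theorem C_mul_map_sub_C_mul_map_ne_zero (hAB : IsCoprime A B)
    (hr : ¬ (A.natDegree = 0 ∧ B.natDegree = 0)) (w : L) :
    C (aeval w A) * B.map (algebraMap K L) - C (aeval w B) * A.map (algebraMap K L) ≠ 0 := by
  intro h
  rw [sub_eq_zero] at h
  have hAB' := (isCoprime_map (algebraMap K L)).mpr hAB
  rcases aeval_ne_zero_of_isCoprime hAB w with ha | hb
  · have := natDegree_eq_zero_of_C_mul_eq_C_mul hAB'.symm ha h.symm
    simp only [natDegree_map] at this
    exact hr this.symm
  · have := natDegree_eq_zero_of_C_mul_eq_C_mul hAB' hb h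
    simp only [natDegree_map] at this
    exact hr this

theorem transcendental_of_aeval_mul_aeval_eq (hAB : IsCoprime A B)
    (hr : ¬ (A.natDegree = 0 ∧ B.natDegree = 0)) {u v : L} (hu : Transcendental K u)
    (huv : aeval u A * aeval v B = aeval v A * aeval u B) : Transcendental K v := by
  intro hv
  have : Algebra.IsAlgebraic K K⟮v⟯ := isAlgebraic_adjoin_simple hv.isIntegral
  refine hu.extendScalars K⟮v⟯
    ⟨_, C_mul_map_sub_C_mul_map_ne_zero hAB hr (AdjoinSimple.gen K v), ?_⟩
  have hgen (P : K[X]) : algebraMap K⟮v⟯ L (aeval (AdjoinSimple.gen K v) P) = aeval v P := by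
    rw [← aeval_algebraMap_apply, AdjoinSimple.algebraMap_gen]
  simp only [map_sub, map_mul, aeval_C, hgen, aeval_map_algebraMap]
  linear_combination huv.symm

end Polynomial

theorem transcendental_algebraMap_X (K : Type*) [Field K] :
    Transcendental K (algebraMap (RatFunc K) (AlgebraicClosure (RatFunc K)) RatFunc.X) := by
  rw [transcendental_algebraMap_iff (algebraMap (RatFunc K) _).injective, ← RatFunc.algebraMap_X,
    transcendental_algebraMap_iff (IsFractionRing.injective _ _)]
  exact transcendental_X K

section Evaluation

variable {S : Type*} [CommRing S] [Algebra ℝ S]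

theorem aeval_inT (x : Fin 2 → S) (p : ℝ[X]) : MvPolynomial.aeval x (inT p) = aeval (x 0) p := by
  rw [inT, ← aeval_algHom_apply, MvPolynomial.aeval_X]

theorem aeval_inS (x : Fin 2 → S) (p : ℝ[X]) : MvPolynomial.aeval x (inS p) = aeval (x 1) p := by
  rw [inS, ← aeval_algHom_apply, MvPolynomial.aeval_X]

theorem aeval_alphaPoly (x y : S) (A B : ℝ[X]) :
    MvPolynomial.aeval ![x, y] (alphaPoly A B) = aeval x A * aeval y B - aeval y A * aeval x B := by
  simp only [alphaPoly, map_sub, map_mul, aeval_inT, aeval_inS, Matrix.cons_val_zero,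
    Matrix.cons_val_one]

theorem aeval_betaPoly (x y : S) (C D : ℝ[X]) (k : ℝ) :
    MvPolynomial.aeval ![x, y] (betaPoly C D k) =
      aeval x C * aeval y D - aeval y C * aeval x D -
        algebraMap ℝ S (2 * k * Real.pi) * (aeval x D * aeval y D) := by
  simp only [betaPoly, map_sub, map_mul, aeval_inT, aeval_inS, MvPolynomial.aeval_C,
    Matrix.cons_val_zero, Matrix.cons_val_one]

end Evaluation

theorem equivMvPolynomial_C_eq_inT (p : ℝ[X]) : equivMvPolynomial ℝ (C p) = inT p := by
  have : ((equivMvPolynomial ℝ).toAlgHom.comp (CAlgHom : ℝ[X] →ₐ[ℝ] ℝ[X][Y])) =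
      aeval (MvPolynomial.X 0) :=
    algHom_ext (by simp)
  exact DFunLike.congr_fun this p

variable {A B : ℝ[X]}

theorem isUnit_of_inT_dvd_alphaPoly (hAB : IsCoprime A B)
    (hr : ¬ (A.natDegree = 0 ∧ B.natDegree = 0)) {p : ℝ[X]} (hp : inT p ∣ alphaPoly A B) :
    IsUnit p := by
  by_contra hpu
  obtain ⟨c, hc⟩ := IsAlgClosed.exists_aeval_eq_zero ℂ p (mt isUnit_iff_degree_eq_zero.mpr hpu)
  refine C_mul_map_sub_C_mul_map_ne_zero hAB hr c (Polynomial.funext fun y => ?_)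
  obtain ⟨q, hq⟩ := hp
  have := congrArg (MvPolynomial.aeval ![c, y]) hq
  simp only [aeval_alphaPoly, map_mul, aeval_inT, Matrix.cons_val_zero, hc, zero_mul] at this
  simp only [eval_sub, eval_mul, eval_C, eval_map_algebraMap, eval_zero]
  linear_combination this

theorem exists_transcendental_aeval_eq_zero {L : Type*} [Field L] [IsAlgClosed L] [Algebra ℝ L]
    (hAB : IsCoprime A B) (hr : ¬ (A.natDegree = 0 ∧ B.natDegree = 0))
    {h : MvPolynomial (Fin 2) ℝ} (hh : ¬ IsUnit h) (hα : h ∣ alphaPoly A B)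
    {u : L} (hu : Transcendental ℝ u) :
    ∃ v : L, Transcendental ℝ v ∧ MvPolynomial.aeval ![u, v] h = 0 := by
  set H := (equivMvPolynomial ℝ).symm h
  have hH : H.natDegree ≠ 0 := by
    intro h0
    have hC : h = inT (H.coeff 0) := by
      rw [← equivMvPolynomial_C_eq_inT, ← eq_C_of_natDegree_eq_zero h0, AlgEquiv.apply_symm_apply]
    rw [hC] at hh hα
    exact hh ((isUnit_of_inT_dvd_alphaPoly hAB hr hα).map _)
  have hdeg : (H.map (aeval u : ℝ[X] →ₐ[ℝ] L).toRingHom).degree ≠ 0 := by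
    rw [degree_map_eq_of_injective (transcendental_iff_injective.mp hu)]
    exact fun h0 => hH (natDegree_eq_of_degree_eq_some h0)
  obtain ⟨v, hv⟩ := IsAlgClosed.exists_root _ hdeg
  rw [IsRoot, eval_map_aeval_eq_aevalAeval, aevalAeval_equivMvPolynomial_symm] at hv
  refine ⟨v, transcendental_of_aeval_mul_aeval_eq hAB hr hu ?_, hv⟩
  obtain ⟨q, hq⟩ := hα
  have := congrArg (MvPolynomial.aeval ![u, v]) hq
  rw [map_mul, hv, zero_mul, aeval_alphaPoly] at this
  simpa [sub_eq_zero] using this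

theorem exists_transcendental_seq {L : Type*} [Field L] [IsAlgClosed L] [Algebra ℝ L]
    (hAB : IsCoprime A B) (hr : ¬ (A.natDegree = 0 ∧ B.natDegree = 0))
    {h : MvPolynomial (Fin 2) ℝ} (hh : ¬ IsUnit h) (hα : h ∣ alphaPoly A B)
    {x₀ : L} (hx₀ : Transcendental ℝ x₀) :
    ∃ x : ℕ → L, (∀ n, Transcendental ℝ (x n)) ∧
      ∀ n, MvPolynomial.aeval ![x n, x (n + 1)] h = 0 := by
  choose next hnext_tr hnext using
    fun u : {u : L // Transcendental ℝ u} => exists_transcendental_aeval_eq_zero hAB hr hh hα u.2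
  let x (n : ℕ) : {u : L // Transcendental ℝ u} := (fun u => ⟨next u, hnext_tr u⟩)^[n] ⟨x₀, hx₀⟩
  refine ⟨fun n => x n, fun n => (x n).2, fun n => ?_⟩
  simp only [x, Function.iterate_succ_apply']
  exact hnext _

section Sequences

variable {L : Type*} [Field L] [Algebra ℝ L] {u v : L}

theorem div_eq_div_of_aeval_alphaPoly_eq_zero (hu : aeval u B ≠ 0) (hv : aeval v B ≠ 0)
    (h : MvPolynomial.aeval ![u, v] (alphaPoly A B) = 0) :
    aeval v A / aeval v B = aeval u A / aeval u B := by
  rw [aeval_alphaPoly] at h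
  rw [div_eq_div_iff hv hu]
  linear_combination -h

theorem div_eq_div_sub_of_aeval_betaPoly_eq_zero {C D : ℝ[X]} {k : ℝ} (hu : aeval u D ≠ 0)
    (hv : aeval v D ≠ 0) (h : MvPolynomial.aeval ![u, v] (betaPoly C D k) = 0) :
    aeval v C / aeval v D = aeval u C / aeval u D - algebraMap ℝ L (2 * k * Real.pi) := by
  rw [aeval_betaPoly] at h
  field_simp
  linear_combination -h

theorem not_exists_transcendental_seq_alphaPoly_betaPoly [CharZero L] {C D : ℝ[X]} (hB : B ≠ 0)
    (hD : D ≠ 0) (hAB : IsCoprime A B) (hr : ¬ (A.natDegree = 0 ∧ B.natDegree = 0)) {k : ℝ}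
    (hk : k ≠ 0) :
    ¬ ∃ x : ℕ → L, (∀ n, Transcendental ℝ (x n)) ∧
      (∀ n, MvPolynomial.aeval ![x n, x (n + 1)] (alphaPoly A B) = 0) ∧
      ∀ n, MvPolynomial.aeval ![x n, x (n + 1)] (betaPoly C D k) = 0 := by
  rintro ⟨x, hx_tr, hα, hβ⟩
  have hBx (n : ℕ) : aeval (x n) B ≠ 0 := fun h0 => hx_tr n ⟨B, hB, h0⟩
  have hDx (n : ℕ) : aeval (x n) D ≠ 0 := fun h0 => hx_tr n ⟨D, hD, h0⟩
  have hr_const (n : ℕ) : aeval (x n) A / aeval (x n) B = aeval (x 0) A / aeval (x 0) B := by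
    induction n with
    | zero => rfl
    | succ n ih => rw [div_eq_div_of_aeval_alphaPoly_eq_zero (hBx n) (hBx (n + 1)) (hα n), ih]
  have hθ_shift (n : ℕ) : aeval (x n) C / aeval (x n) D =
      aeval (x 0) C / aeval (x 0) D - n * algebraMap ℝ L (2 * k * Real.pi) := by
    induction n with
    | zero => simp
    | succ n ih =>
      rw [div_eq_div_sub_of_aeval_betaPoly_eq_zero (hDx n) (hDx (n + 1)) (hβ n), ih,
        Nat.cast_succ]
      ring
  have hκ : algebraMap ℝ L (2 * k * Real.pi) ≠ 0 := by simp [hk, Real.pi_ne_zero]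
  have hx_inj : Function.Injective x := fun m n hmn => by
    have := hθ_shift m
    rw [hmn, hθ_shift n, sub_right_inj] at this
    exact_mod_cast mul_right_cancel₀ hκ this.symm
  refine Set.infinite_range_of_injective hx_inj
    ((finite_setOfPred_isRoot (C_mul_map_sub_C_mul_map_ne_zero hAB hr (x 0))).subset ?_)
  rintro _ ⟨n, rfl⟩
  have := hr_const n
  rw [div_eq_div_iff (hBx n) (hBx 0)] at this
  simp only [Set.mem_ofPred_eq, IsRoot.def, eval_sub, eval_mul, eval_C, eval_map_algebraMap]
  linear_combination -this

end Sequences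

theorem isRelPrime_alphaPoly_betaPoly {C D : ℝ[X]} (hB : B ≠ 0) (hD : D ≠ 0)
    (hAB : IsCoprime A B) (hr : ¬ (A.natDegree = 0 ∧ B.natDegree = 0)) {k : ℝ} (hk : k ≠ 0) :
    IsRelPrime (alphaPoly A B) (betaPoly C D k) := by
  intro h hα hβ
  by_contra hh
  obtain ⟨x, hx_tr, hx⟩ := exists_transcendental_seq hAB hr hh hα (transcendental_algebraMap_X ℝ)
  have hx_dvd {P} (hP : h ∣ P) (n : ℕ) : MvPolynomial.aeval ![x n, x (n + 1)] P = 0 :=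
    zero_dvd_iff.mp (hx n ▸ map_dvd _ hP)
  exact not_exists_transcendental_seq_alphaPoly_betaPoly hB hD hAB hr hk
    ⟨x, hx_tr, hx_dvd hα, hx_dvd hβ⟩

theorem alpha_beta_coprime_and_finitely_many_solutions
    (A B C D : Polynomial ℝ) (hB : B ≠ 0) (hD : D ≠ 0)
    (hAB : IsCoprime A B)
    (hr : ¬ (A.natDegree = 0 ∧ B.natDegree = 0))
    (k : ℝ) (hk : k ≠ 0) :
    (∀ c : MvPolynomial (Fin 2) ℝ, c ∣ alphaPoly A B → c ∣ betaPoly C D k → IsUnit c) ∧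
    {p : ℝ × ℝ |
        (B.eval p.1 ≠ 0 ∧ D.eval p.1 ≠ 0) ∧ (B.eval p.2 ≠ 0 ∧ D.eval p.2 ≠ 0) ∧
        A.eval p.1 / B.eval p.1 = A.eval p.2 / B.eval p.2 ∧
        C.eval p.1 / D.eval p.1 = C.eval p.2 / D.eval p.2 + 2 * k * Real.pi}.Finite := by
  have hcop := isRelPrime_alphaPoly_betaPoly (C := C) hB hD hAB hr hk
  refine ⟨fun c hα hβ => hcop hα hβ,
    (MvPolynomial.finite_setOf_aeval_eq_zero_of_isRelPrime hcop).subset ?_⟩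
  rintro ⟨t, s⟩ ⟨⟨hBt, hDt⟩, ⟨hBs, hDs⟩, hr_eq, hθ_eq⟩
  simp only [aeval_alphaPoly, aeval_betaPoly, coe_aeval_eq_eval,
    Algebra.algebraMap_self, RingHom.id_apply] at hr_eq hθ_eq ⊢
  rw [div_eq_div_iff hBt hBs] at hr_eq
  field_simp at hθ_eq
  constructor
  · linear_combination hr_eq
  · linear_combination hθ_eq
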